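/- Let Ψ = (r₁₁∨r₁₂∨r₁₃) ∧ ⋯ ∧ (r_k1∨r_k2∨r_k3) be a 3-CNF formula over propositional variables p₁,…,p_n (the r_ij are literals). Introduce fresh variables p′₁,…,p′_n and define, for each literal r_jm occurring in Ψ, r′_jm = p′ᵢ when r_jm = pᵢ and r′_jm = pᵢ when r_jm = ¬pᵢ. Let Γ_Ψ consist of the axioms ¬pᵢ→¬p′ᵢ→⊥ for i = 1,…,n and r′_{j1}→r′_{j2}→r′_{j3}→⊥ for j = 1,…,k. Then Ψ is classically unsatisfiable if and only if Γ_Ψ ⊢ ⊥ is intuitionistically derivable (and the derivation uses ⊥ only as a distinguished atom, i.e., without the ex falso rule). -/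

import Mathlib

set_option autoImplicit true

namespace IPCStmt19

/-- Implicational formulas (simple types). -/
inductive ITy : Type
  | var : ℕ → ITy
  | imp : ITy → ITy → ITy
  deriving DecidableEq

/-- `impList [σ₁, …, σₙ] τ = σ₁ → ⋯ → σₙ → τ`. -/
def impList : List ITy → ITy → ITy
  | [], τ => τ
  | σ :: σs, τ => .imp σ (impList σs τ)

/-- The order of an implicational formula: `r(atom) = 0` and
`r(σ → τ) = max (r σ + 1) (r τ)`, i.e. `r(σ₁→⋯→σₖ→p) = 1 + maxᵢ r(σᵢ)`. -/
def order : ITy → ℕ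
  | .var _ => 0
  | .imp σ τ => max (order σ + 1) (order τ)

/-- Intuitionistic natural deduction for the implicational fragment (IIPC):
the rules (var), (→I), (→E). -/
inductive IDeriv : List ITy → ITy → Prop
  | ax {Γ φ} : φ ∈ Γ → IDeriv Γ φ
  | impI {Γ φ ψ} : IDeriv (φ :: Γ) ψ → IDeriv Γ (.imp φ ψ)
  | impE {Γ φ ψ} : IDeriv Γ (.imp φ ψ) → IDeriv Γ φ → IDeriv Γ ψ

/-- The distinguished atom `⊥` (used only as an ordinary atom: no ex falso rule
is available in `IDeriv`). -/
def fls : ITy := .var 0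

/-- The atoms `pᵢ = 2i` and `p′ᵢ = 2i + 1` (distinct from `⊥ = 0` for `i ≥ 1`). -/
def pA (i : ℕ) : ITy := .var (2 * i)
def pA' (i : ℕ) : ITy := .var (2 * i + 1)

/-- `r′_{jm}`: the primed dual atom of a literal — `p′ᵢ` for the positive literal
`pᵢ` and `pᵢ` for the negative literal `¬pᵢ`. -/
def rho' (l : ℕ × Bool) : ITy := if l.2 then pA' l.1 else pA l.1

/-- The value of a literal under a Boolean valuation. -/
def litVal (v : ℕ → Bool) (l : ℕ × Bool) : Bool := if l.2 then v l.1 else !(v l.1)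

/-- `Γ_Ψ`: the axioms `¬pᵢ → ¬p′ᵢ → ⊥` for `i = 1, …, n` and
`r′_{j1} → r′_{j2} → r′_{j3} → ⊥` for `j = 1, …, k` (with `¬φ = φ → ⊥`). -/
def GammaPsi (n k : ℕ) (lit : ℕ → ℕ → ℕ × Bool) : List ITy :=
  ((List.range n).map fun i =>
    ITy.imp (.imp (pA (i + 1)) fls) (.imp (.imp (pA' (i + 1)) fls) fls)) ++
  ((List.range k).map fun j =>
    ITy.imp (rho' (lit (j + 1) 1))
      (.imp (rho' (lit (j + 1) 2)) (.imp (rho' (lit (j + 1) 3)) fls)))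



def evalTy (M : ℕ → Prop) : ITy → Prop
  | .var t => M t
  | .imp σ τ => evalTy M σ → evalTy M τ

theorem IDeriv.sound {M : ℕ → Prop} {Γ φ} (h : IDeriv Γ φ)
    (hΓ : ∀ ψ ∈ Γ, evalTy M ψ) : evalTy M φ := by
  induction h with
  | ax h => exact hΓ _ h
  | impI _ ih =>
      intro hφ
      exact ih (by
        intro ψ hψ
        rcases List.mem_cons.mp hψ with rfl | hψ
        · exact hφ
        · exact hΓ _ hψ)
  | impE _ _ ih1 ih2 => exact ih1 hΓ (ih2 hΓ)

theorem IDeriv.weaken {Γ Γ' : List ITy} {φ} (h : IDeriv Γ φ)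
    (hsub : ∀ ψ ∈ Γ, ψ ∈ Γ') : IDeriv Γ' φ := by
  induction h generalizing Γ' with
  | ax h => exact .ax (hsub _ h)
  | impI _ ih =>
      refine .impI (ih fun ψ hψ => ?_)
      rcases List.mem_cons.mp hψ with rfl | h
      · exact List.mem_cons_self
      · exact List.mem_cons_of_mem _ (hsub _ h)
  | impE _ _ ih1 ih2 => exact .impE (ih1 hsub) (ih2 hsub)

def atomCtx (v : ℕ → Bool) (i : ℕ) : List ITy :=
  (List.range i).map fun t => if v (t + 1) then pA (t + 1) else pA' (t + 1)

theorem atomCtx_succ (v : ℕ → Bool) (i : ℕ) :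
    atomCtx v (i + 1) = atomCtx v i ++ [if v (i + 1) then pA (i + 1) else pA' (i + 1)] := by
  simp [atomCtx, List.range_succ]

theorem atomCtx_congr {v w : ℕ → Bool} (i : ℕ)
    (h : ∀ t, 1 ≤ t → t ≤ i → v t = w t) : atomCtx v i = atomCtx w i := by
  unfold atomCtx
  refine List.map_congr_left fun t ht => ?_
  rw [h (t + 1) (by omega) (by have := List.mem_range.mp ht; omega)]

theorem mem_atomCtx {v : ℕ → Bool} {a i : ℕ} (h1 : 1 ≤ a) (h2 : a ≤ i) :
    (if v a then pA a else pA' a) ∈ atomCtx v i := by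
  unfold atomCtx
  refine List.mem_map.mpr ⟨a - 1, List.mem_range.mpr (by omega), ?_⟩
  have : a - 1 + 1 = a := by omega
  rw [this]

theorem main_ind (n k : ℕ) (lit : ℕ → ℕ → ℕ × Bool)
    (hlit : ∀ j m : ℕ, 1 ≤ j → j ≤ k → 1 ≤ m → m ≤ 3 →
      1 ≤ (lit j m).1 ∧ (lit j m).1 ≤ n)
    (hunsat : ¬ ∃ v : ℕ → Bool, ∀ j : ℕ, 1 ≤ j → j ≤ k →
        ∃ m : ℕ, 1 ≤ m ∧ m ≤ 3 ∧ litVal v (lit j m) = true) :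
    ∀ d (v : ℕ → Bool), IDeriv (atomCtx v (n - d) ++ GammaPsi n k lit) fls := by
  intro d
  induction d with
  | zero =>
      intro v
      simp only [Nat.sub_zero]
      -- find a falsified clause
      have hv : ¬ ∀ j : ℕ, 1 ≤ j → j ≤ k →
          ∃ m : ℕ, 1 ≤ m ∧ m ≤ 3 ∧ litVal v (lit j m) = true :=
        fun h => hunsat ⟨v, h⟩
      push_neg at hv
      obtain ⟨j, hj1, hjk, hfalse⟩ := hv
      have hmem : ∀ m, 1 ≤ m → m ≤ 3 →
          rho' (lit j m) ∈ atomCtx v n ++ GammaPsi n k lit := by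
        intro m hm1 hm3
        have hb := hlit j m hj1 hjk hm1 hm3
        have hf : litVal v (lit j m) = false := by
          have := hfalse m hm1 hm3
          simpa using this
        refine List.mem_append_left _ ?_
        have := mem_atomCtx (v := v) hb.1 hb.2
        unfold litVal at hf
        unfold rho'
        rcases hlit2 : (lit j m).2 with _ | _ <;> simp [hlit2] at hf ⊢
        · simpa [hf] using mem_atomCtx (v := v) hb.1 hb.2
        · simpa [hf] using mem_atomCtx (v := v) hb.1 hb.2
      have hax : ITy.imp (rho' (lit j 1))
          (.imp (rho' (lit j 2)) (.imp (rho' (lit j 3)) fls))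
          ∈ atomCtx v n ++ GammaPsi n k lit := by
        refine List.mem_append_right _ ?_
        refine List.mem_append_right _ ?_
        refine List.mem_map.mpr ⟨j - 1, List.mem_range.mpr (by omega), ?_⟩
        have : j - 1 + 1 = j := by omega
        rw [this]
      exact .impE (.impE (.impE (.ax hax) (.ax (hmem 1 le_rfl (by norm_num))))
        (.ax (hmem 2 one_le_two (by norm_num)))) (.ax (hmem 3 (by norm_num) le_rfl))
  | succ d ih =>
      intro v
      by_cases hd : n ≤ d
      · have : n - (d + 1) = n - d := by omega
        rw [this]; exact ih v
      · push_neg at hd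
        set i := n - (d + 1) with hi
        have hnd : n - d = i + 1 := by omega
        have hi1 : i + 1 ≤ n := by omega
        -- the excluded middle axiom for variable i+1
        have hax : ITy.imp (.imp (pA (i + 1)) fls) (.imp (.imp (pA' (i + 1)) fls) fls)
            ∈ atomCtx v i ++ GammaPsi n k lit := by
          refine List.mem_append_right _ (List.mem_append_left _ ?_)
          exact List.mem_map.mpr ⟨i, List.mem_range.mpr (by omega), rfl⟩
        have branch : ∀ b : Bool,
            IDeriv ((if b then pA (i + 1) else pA' (i + 1)) ::
              (atomCtx v i ++ GammaPsi n k lit)) fls := by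
          intro b
          set v' : ℕ → Bool := fun t => if t = i + 1 then b else v t with hv'
          have h := ih v'
          rw [hnd, atomCtx_succ] at h
          have e1 : atomCtx v' i = atomCtx v i :=
            atomCtx_congr i fun t h1 h2 => if_neg (by omega)
          have e2 : v' (i + 1) = b := by simp [hv']
          rw [e1, e2] at h
          refine h.weaken fun ψ hψ => ?_
          simp only [List.mem_append, List.mem_singleton, List.mem_cons] at hψ ⊢
          tauto
        exact .impE (.impE (.ax hax) (.impI (by simpa using branch true)))
          (.impI (by simpa using branch false))

/-- a 3-CNF formula `Ψ` (with clauses `lit j 1 ∨ lit j 2 ∨ lit j 3`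
for `j = 1, …, k`, over the variables `p₁, …, pₙ`) is classically unsatisfiable iff
`Γ_Ψ ⊢ ⊥` is intuitionistically derivable, where the derivation uses `⊥` only as a
distinguished atom, i.e. it is in the implicational fragment without ex falso. -/
theorem threecnf_unsat_iff_bot_derivable (n k : ℕ) (hn : 1 ≤ n) (hk : 1 ≤ k)
    (lit : ℕ → ℕ → ℕ × Bool)
    (hlit : ∀ j m : ℕ, 1 ≤ j → j ≤ k → 1 ≤ m → m ≤ 3 →
      1 ≤ (lit j m).1 ∧ (lit j m).1 ≤ n) :
    (¬ ∃ v : ℕ → Bool, ∀ j : ℕ, 1 ≤ j → j ≤ k →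
        ∃ m : ℕ, 1 ≤ m ∧ m ≤ 3 ∧ litVal v (lit j m) = true) ↔
      IDeriv (GammaPsi n k lit) fls := by
  constructor
  · intro hunsat
    have h := main_ind n k lit hlit hunsat n (fun _ => false)
    simpa [atomCtx] using h
  · rintro h ⟨v, hv⟩
    set M : ℕ → Prop := fun t =>
      t ≠ 0 ∧ (if t % 2 = 0 then v (t / 2) = true else v (t / 2) = false) with hM
    have hsem : evalTy M fls := by
      refine h.sound fun ψ hψ => ?_
      unfold GammaPsi at hψ
      rcases List.mem_append.mp hψ with hψ | hψ
      · obtain ⟨i, hi, rfl⟩ := List.mem_map.mp hψ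
        intro hp hp'
        rcases hvi : v (i + 1) with _ | _
        · exact hp' (by
            show M (2 * (i + 1) + 1)
            constructor
            · omega
            · have h1 : (2 * (i + 1) + 1) % 2 = 1 := by omega
              have h2 : (2 * (i + 1) + 1) / 2 = i + 1 := by omega
              simp [h1, h2, hvi])
        · exact hp (by
            show M (2 * (i + 1))
            constructor
            · omega
            · have h1 : (2 * (i + 1)) % 2 = 0 := by omega
              have h2 : (2 * (i + 1)) / 2 = i + 1 := by omega
              simp [h1, h2, hvi])
      · obtain ⟨j, hj, rfl⟩ := List.mem_map.mp hψ
        have hjr := List.mem_range.mp hj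
        intro h1 h2 h3
        obtain ⟨m, hm1, hm3, hsat⟩ := hv (j + 1) (by omega) (by omega)
        have hA : ∀ m', 1 ≤ m' → m' ≤ 3 → evalTy M (rho' (lit (j + 1) m')) →
            litVal v (lit (j + 1) m') = false := by
          intro m' _ _ he
          unfold rho' litVal at *
          rcases hb : (lit (j + 1) m').2 with _ | _ <;>
            simp only [hb, if_true, if_false, Bool.false_eq_true] at he ⊢
          · -- negative literal: rho' = pA, evalTy says v = true
            have : v (lit (j + 1) m').1 = true := by
              have h2 : (2 * (lit (j + 1) m').1) % 2 = 0 := by omega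
              have h3 : (2 * (lit (j + 1) m').1) / 2 = (lit (j + 1) m').1 := by omega
              have := he.2
              simpa [h2, h3] using this
            simp [this]
          · have h2 : (2 * (lit (j + 1) m').1 + 1) % 2 = 1 := by omega
            have h3 : (2 * (lit (j + 1) m').1 + 1) / 2 = (lit (j + 1) m').1 := by omega
            have := he.2
            simpa [h2, h3] using this
        interval_cases m
        · rw [hA 1 le_rfl (by norm_num) h1] at hsat; exact absurd hsat (by simp)
        · rw [hA 2 one_le_two (by norm_num) h2] at hsat; exact absurd hsat (by simp)
        · rw [hA 3 (by norm_num) le_rfl h3] at hsat; exact absurd hsat (by simp)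
    exact hsem.1 rfl


end IPCStmt19
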